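/- arXiv:2203.03036 — 2 statements merged into one kernel-verified Lean document; each statement's English description precedes it below -/
import Mathlib

section
/- Let G be a finite group, π an irreducible unitary representation of G of dimension d, and 1 ≤ i ≤ d fixed. Then the family {√(d/|G|)·π_{j,i} : j = 1,…,d} is an orthonormal basis of the subspace E_{π,i} of L²(G); in particular E_{π,i} has dimension d. -/
open scoped BigOperators

noncomputable section

/-- A unitary representation of a group `G` of dimension `d`: a group homomorphism from `G`
into the group of `d × d` complex unitary matrices. -/
abbrev URep (G : Type*) [Group G] (d : ℕ) : Type _ :=
  G →* Matrix.unitaryGroup (Fin d) ℂ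

/-- A unitary representation is irreducible if its dimension is positive and the only
subspaces `W ⊆ ℂ^d` with `π(g)W ⊆ W` for all `g` are `{0}` and `ℂ^d`. -/
def URepIrreducible {G : Type*} [Group G] {d : ℕ} (π : URep G d) : Prop :=
  0 < d ∧ ∀ W : Submodule ℂ (Fin d → ℂ),
    (∀ g : G, ∀ ξ ∈ W, ((π g : Matrix (Fin d) (Fin d) ℂ)).mulVec ξ ∈ W) → W = ⊥ ∨ W = ⊤

/-- The coefficient function `π_{j,i}(g) = (π(g))_{i,j}`. -/
def coeff {G : Type*} [Group G] {d : ℕ} (π : URep G d) (j i : Fin d) : G → ℂ :=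
  fun g => (π g : Matrix (Fin d) (Fin d) ℂ) i j

/-- The subspace `E_{π,i} = span{π_{j,i} : 1 ≤ j ≤ d}` of `L²(G)`. -/
def Esp {G : Type*} [Group G] {d : ℕ} (π : URep G d) (i : Fin d) : Submodule ℂ (G → ℂ) :=
  Submodule.span ℂ (Set.range fun j : Fin d => coeff π j i)

/-- Unitary equivalence of two unitary representations: the dimensions agree and there is a
unitary matrix `U` with `U⁻¹ π(g) U = σ(g)` for all `g`. -/
def UEquiv {G : Type*} [Group G] {d d' : ℕ} (π : URep G d) (σ : URep G d') : Prop :=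
  ∃ h : d = d', ∃ U : Matrix (Fin d') (Fin d') ℂ, U ∈ Matrix.unitaryGroup (Fin d') ℂ ∧
    ∀ g : G, U⁻¹ * (Matrix.reindex (finCongr h) (finCongr h)
        ((π g : Matrix (Fin d) (Fin d) ℂ))) * U = (σ g : Matrix (Fin d') (Fin d') ℂ)

/-- `π(S) = ∑_{a ∈ S} π(a)`. -/
def repSum {G : Type*} [Group G] {d : ℕ} (π : URep G d) (S : Finset G) :
    Matrix (Fin d) (Fin d) ℂ :=
  ∑ a ∈ S, (π a : Matrix (Fin d) (Fin d) ℂ)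

/-- `X` is a `λ`-eigenvector (possibly zero) of `M`: `M X = λ X`. -/
def IsEigvec {d : ℕ} (M : Matrix (Fin d) (Fin d) ℂ) (lam : ℝ) (X : Fin d → ℂ) : Prop :=
  M.mulVec X = (lam : ℂ) • X

/-- `λ` is an eigenvalue of `M`. -/
def IsEigval {d : ℕ} (M : Matrix (Fin d) (Fin d) ℂ) (lam : ℝ) : Prop :=
  ∃ X : Fin d → ℂ, X ≠ 0 ∧ IsEigvec M lam X

/-- The `λ`-eigenspace `E_λ(M)` as a submodule of `ℂ^d`. -/
def eigSp {d : ℕ} (M : Matrix (Fin d) (Fin d) ℂ) (lam : ℝ) : Submodule ℂ (Fin d → ℂ) :=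
  LinearMap.ker (M.mulVecLin - (lam : ℂ) • LinearMap.id)

/-- The inner product `⟨u, v⟩ = ∑ u(x) conj(v(x))`, linear in the first variable
(the convention of the paper). -/
def dotC {X : Type*} [Fintype X] (u v : X → ℂ) : ℂ :=
  ∑ x, u x * (starRingEnd ℂ) (v x)

/-- The squared norm `‖u‖² = ∑ |u(x)|²`. -/
def norm2 {X : Type*} [Fintype X] (u : X → ℂ) : ℝ :=
  ∑ x, Complex.normSq (u x)

/-- The map `Θ_{π,i} : X ↦ ∑_k X_k π_{k,i}`. -/
def Theta {G : Type*} [Group G] {d : ℕ} (π : URep G d) (i : Fin d)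
    (X : Fin d → ℂ) : G → ℂ :=
  fun g => ∑ k, X k * coeff π k i g

/-- The map `Θ_{π,i}` as a linear map. -/
def ThetaL {G : Type*} [Group G] {d : ℕ} (π : URep G d) (i : Fin d) :
    (Fin d → ℂ) →ₗ[ℂ] (G → ℂ) where
  toFun X := fun g => ∑ k, X k * coeff π k i g
  map_add' X Y := by
    funext g
    simp [add_mul, Finset.sum_add_distrib]
  map_smul' c X := by
    funext g
    simp [Finset.mul_sum, mul_assoc]

/-- The space `Z_{π,i,λ} = {∑_k X_k π_{k,i} : X ∈ E_λ(π(S))}`. -/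
def Zset {G : Type*} [Group G] {d : ℕ} (π : URep G d) (i : Fin d) (lam : ℝ) (S : Finset G) :
    Set (G → ℂ) :=
  {f | ∃ X : Fin d → ℂ, IsEigvec (repSum π S) lam X ∧ f = Theta π i X}

/-- The normalized map `Θ̃_{π,i} = √(d/n!) Θ_{π,i}` for the symmetric group `𝕊_n`. -/
def ThetaT (n : ℕ) {d : ℕ} (π : URep (Equiv.Perm (Fin n)) d) (i : Fin d)
    (X : Fin d → ℂ) : Equiv.Perm (Fin n) → ℂ :=
  fun g => (Real.sqrt (d / n.factorial) : ℂ) * Theta π i X g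

/-- `ψ` is a frame for `W` with lower bound `A` and upper bound `B`:
`A‖v‖² ≤ ∑_t |⟨v, ψ_t⟩|² ≤ B‖v‖²` for all `v ∈ W`. -/
def IsFrameOn {X ι : Type*} [Fintype X] [Fintype ι] (ψ : ι → (X → ℂ)) (W : Set (X → ℂ))
    (A B : ℝ) : Prop :=
  0 < A ∧ A ≤ B ∧ (∀ t, ψ t ∈ W) ∧
    ∀ v ∈ W, A * norm2 v ≤ ∑ t, Complex.normSq (dotC v (ψ t)) ∧
      ∑ t, Complex.normSq (dotC v (ψ t)) ≤ B * norm2 v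

/-- `ψ` is a frame for `W` (for some frame bounds `0 < A ≤ B`). -/
def IsFrameIn {X ι : Type*} [Fintype X] [Fintype ι] (ψ : ι → (X → ℂ)) (W : Set (X → ℂ)) :
    Prop :=
  ∃ A B : ℝ, IsFrameOn ψ W A B


/-!
Averaging `A ↦ ∑_g π(g) A π(g)*` over the group yields a matrix commuting with every `π(h)`, so by
Schur's lemma it is a scalar, which its trace identifies as `(|G|/d) tr A`. For `A = E_{jk}` the
`(i,i)` entry of this identity is `⟨π_{j,i}, π_{k,i}⟩ = (|G|/d) δ_{jk}`. An orthonormal family is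
linearly independent, and rescaling by a nonzero constant does not change the span.
-/

open Matrix

lemma Matrix.trace_single_eq_ite {n R : Type*} [Fintype n] [DecidableEq n] [AddCommMonoid R]
    (i j : n) (c : R) : trace (Matrix.single i j c) = if i = j then c else 0 := by
  split_ifs with h
  · exact h ▸ trace_single_eq_same i c
  · exact trace_single_eq_of_ne i j c h

lemma Matrix.mul_single_mul_star_apply {n : Type*} [Fintype n] [DecidableEq n]
    (U : Matrix n n ℂ) (i j k : n) :
    (U * Matrix.single j k 1 * star U : Matrix n n ℂ) i i = U i j * starRingEnd ℂ (U i k) := by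
  simp [mul_apply, single_apply, ite_and]

section dotC

variable {X : Type*} [Fintype X]

lemma dotC_eq_inner (u v : X → ℂ) : dotC u v = inner ℂ (WithLp.toLp 2 v) (WithLp.toLp 2 u) := by
  simp [dotC, PiLp.inner_apply]

lemma dotC_smul_smul (a b : ℂ) (u v : X → ℂ) :
    dotC (a • u) (b • v) = a * starRingEnd ℂ b * dotC u v := by
  simp only [dotC, Pi.smul_apply, smul_eq_mul, map_mul, Finset.mul_sum]
  exact Finset.sum_congr rfl fun x _ => by ring

lemma linearIndependent_of_dotC_eq_ite {ι : Type*} [DecidableEq ι] {v : ι → X → ℂ}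
    (hv : ∀ j k, dotC (v j) (v k) = if j = k then 1 else 0) : LinearIndependent ℂ v := by
  have : Orthonormal ℂ fun j => WithLp.toLp 2 (v j) :=
    orthonormal_iff_ite.mpr fun j k => by rw [← dotC_eq_inner, hv]; exact if_congr eq_comm rfl rfl
  exact this.linearIndependent.of_comp (WithLp.linearEquiv 2 ℂ (X → ℂ)).symm.toLinearMap

end dotC

section Schur

variable {G : Type*} [Group G] {d : ℕ}

lemma URepIrreducible.eq_smul_one_of_commute {π : URep G d} (hπ : URepIrreducible π)
    {M : Matrix (Fin d) (Fin d) ℂ} (hM : ∀ g, (π g : Matrix (Fin d) (Fin d) ℂ) * M = M * π g) :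
    ∃ c : ℂ, M = c • 1 := by
  obtain ⟨hd, hirr⟩ := hπ
  have : NeZero d := ⟨hd.ne'⟩
  obtain ⟨c, hc⟩ := Module.End.exists_eigenvalue M.mulVecLin
  have hinv : ∀ g, ∀ ξ ∈ Module.End.eigenspace M.mulVecLin c,
      (π g : Matrix (Fin d) (Fin d) ℂ) *ᵥ ξ ∈ Module.End.eigenspace M.mulVecLin c := by
    intro g ξ hξ
    rw [Module.End.mem_eigenspace_iff, mulVecLin_apply] at hξ ⊢
    rw [mulVec_mulVec, ← hM, ← mulVec_mulVec, hξ, mulVec_smul]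
  have htop : Module.End.eigenspace M.mulVecLin c = ⊤ :=
    (hirr _ hinv).resolve_left (Module.End.hasEigenvalue_iff.mp hc)
  refine ⟨c, ext_of_mulVec_single fun k => ?_⟩
  have hk : Pi.single k 1 ∈ Module.End.eigenspace M.mulVecLin c := htop ▸ Submodule.mem_top
  rw [Module.End.mem_eigenspace_iff, mulVecLin_apply] at hk
  rw [hk, smul_mulVec, one_mulVec]

variable [Fintype G] (π : URep G d)

lemma commute_sum_mul_mul_star (A : Matrix (Fin d) (Fin d) ℂ) (h : G) :
    (π h : Matrix (Fin d) (Fin d) ℂ) * ∑ g, π g * A * star (π g : Matrix (Fin d) (Fin d) ℂ) =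
      (∑ g, π g * A * star (π g : Matrix (Fin d) (Fin d) ℂ)) * π h := by
  rw [Finset.mul_sum, Finset.sum_mul]
  refine Fintype.sum_equiv (Equiv.mulLeft h) _ _ fun g => ?_
  simp only [Equiv.coe_mulLeft, map_mul, Submonoid.coe_mul, star_mul, mul_assoc,
    Unitary.star_mul_self_of_mem (π h).prop, mul_one]

lemma trace_sum_mul_mul_star (A : Matrix (Fin d) (Fin d) ℂ) :
    trace (∑ g, (π g : Matrix (Fin d) (Fin d) ℂ) * A * star (π g : Matrix (Fin d) (Fin d) ℂ)) =
      Fintype.card G * trace A := by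
  simp [trace_sum, trace_mul_cycle _ A, Unitary.star_mul_self_of_mem (π _).prop]

variable {π}

theorem URepIrreducible.sum_mul_mul_star (hπ : URepIrreducible π) (A : Matrix (Fin d) (Fin d) ℂ) :
    ∑ g, (π g : Matrix (Fin d) (Fin d) ℂ) * A * star (π g : Matrix (Fin d) (Fin d) ℂ) =
      (Fintype.card G / d * trace A) • 1 := by
  obtain ⟨c, hc⟩ := hπ.eq_smul_one_of_commute (commute_sum_mul_mul_star π A)
  have htrace : c * d = Fintype.card G * trace A := by
    simpa [hc, trace_one, mul_comm] using trace_sum_mul_mul_star π A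
  have hd : (d : ℂ) ≠ 0 := Nat.cast_ne_zero.mpr hπ.1.ne'
  rw [hc, div_mul_eq_mul_div, ← htrace, mul_div_cancel_right₀ _ hd]

theorem URepIrreducible.dotC_coeff (hπ : URepIrreducible π) (i j k : Fin d) :
    dotC (coeff π j i) (coeff π k i) = Fintype.card G / d * if j = k then 1 else 0 := by
  have := congrFun₂ (hπ.sum_mul_mul_star (Matrix.single j k 1)) i i
  simpa [Matrix.sum_apply, mul_single_mul_star_apply, trace_single_eq_ite, dotC, coeff] using this

end Schur

/-- For an irreducible unitary representation `π` of a finite group `G` of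
dimension `d` and fixed `i`, the family `{√(d/|G|) π_{j,i} : j = 1,…,d}` is an orthonormal
basis of `E_{π,i}`; in particular `E_{π,i}` has dimension `d`. -/
theorem stmt2 {G : Type*} [Group G] [Fintype G] {d : ℕ}
    (π : URep G d) (hπ : URepIrreducible π) (i : Fin d) :
    (∀ j k : Fin d,
        dotC (((Real.sqrt (d / Fintype.card G) : ℝ) : ℂ) • coeff π j i)
          (((Real.sqrt (d / Fintype.card G) : ℝ) : ℂ) • coeff π k i) =
          if j = k then 1 else 0) ∧
    Submodule.span ℂ
        (Set.range fun j : Fin d =>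
          ((Real.sqrt (d / Fintype.card G) : ℝ) : ℂ) • coeff π j i) = Esp π i ∧
    Module.finrank ℂ (Esp π i) = d := by
  set s : ℝ := Real.sqrt (d / Fintype.card G)
  have hG : (Fintype.card G : ℂ) ≠ 0 := Nat.cast_ne_zero.mpr Fintype.card_ne_zero
  have hd : (d : ℂ) ≠ 0 := Nat.cast_ne_zero.mpr hπ.1.ne'
  have hs : (s : ℂ) * starRingEnd ℂ s = d / Fintype.card G := by
    rw [Complex.conj_ofReal, ← Complex.ofReal_mul, Real.mul_self_sqrt (by positivity),
      Complex.ofReal_div, Complex.ofReal_natCast, Complex.ofReal_natCast]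
  have horth : ∀ j k, dotC ((s : ℂ) • coeff π j i) ((s : ℂ) • coeff π k i) =
      if j = k then 1 else 0 := fun j k => by
    rw [dotC_smul_smul, hs, hπ.dotC_coeff, ← mul_assoc, div_mul_div_cancel₀ hG, div_self hd, one_mul]
  have hspan : Submodule.span ℂ (Set.range fun j => (s : ℂ) • coeff π j i) = Esp π i := by
    have hs0 : (s : ℂ) ≠ 0 := fun h => div_ne_zero hd hG (by rw [← hs, h, zero_mul])
    rw [Set.range_smul, Submodule.span_smul_eq_of_isUnit _ _ hs0.isUnit, Esp]
  refine ⟨horth, hspan, ?_⟩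
  rw [← hspan, finrank_span_eq_card (linearIndependent_of_dotC_eq_ite horth), Fintype.card_fin]
end
end

section
/- Let n ≥ 1, let 𝕊_n be the symmetric group on n letters, S ⊆ 𝕊_n an inverse-closed subset, π an irreducible unitary representation of 𝕊_n of dimension d, and 1 ≤ i ≤ d. For each eigenvalue λ of π(S), let F^λ be a finite family of vectors in E_λ(π(S)) which is a frame for E_λ(π(S)). Then the collection Φ_{π,i} = {Θ̃_{π,i,λ}(ψ) : ψ ∈ F^λ, λ an eigenvalue of π(S)} is a frame for the subspace E_{π,i} of L²(𝕊_n). -/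
open scoped BigOperators

noncomputable section

/-!
Schur's orthogonality relations make `Θ_{π,i}` an isometry up to the factor `√(|G|/d)`, so
`Θ̃_{π,i} = √(d/n!) Θ_{π,i}` is an isometry of `ℂ^d` onto `E_{π,i}`, and isometries carry frames
to frames with the same bounds. Since `S` is inverse-closed, `π(S)` is Hermitian, so `ℂ^d` is the
orthogonal sum of its eigenspaces; frames of orthogonal summands glue to a frame of the sum, with
lower bound the least and upper bound the largest of the summands' bounds.
-/

open Matrix

section dotC

variable {X : Type*} [Fintype X]

lemma dotC_eq_dotProduct (u v : X → ℂ) : dotC u v = u ⬝ᵥ star v := rfl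

lemma dotC_smul_left (c : ℂ) (u v : X → ℂ) : dotC (c • u) v = c * dotC u v := by
  simp only [dotC_eq_dotProduct, smul_dotProduct, smul_eq_mul]

lemma dotC_smul_right (c : ℂ) (u v : X → ℂ) : dotC u (c • v) = star c * dotC u v := by
  simp only [dotC_eq_dotProduct, star_smul, dotProduct_smul, smul_eq_mul]

lemma dotC_sum_left {α : Type*} (s : Finset α) (f : α → X → ℂ) (v : X → ℂ) :
    dotC (∑ a ∈ s, f a) v = ∑ a ∈ s, dotC (f a) v := by
  simp only [dotC_eq_dotProduct, sum_dotProduct]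

lemma star_dotC (u v : X → ℂ) : star (dotC u v) = dotC v u :=
  (dotProduct_star v u).symm

lemma dotC_self (u : X → ℂ) : dotC u u = (norm2 u : ℂ) := by
  simp [dotC, norm2, Complex.mul_conj]

lemma norm2_nonneg (u : X → ℂ) : 0 ≤ norm2 u :=
  Finset.sum_nonneg fun _ _ => Complex.normSq_nonneg _

end dotC

section Frame

variable {X : Type*} [Fintype X]

theorem IsFrameIn.image_of_dotC_eq {Y ι : Type*} [Fintype Y] [Fintype ι] {ψ : ι → X → ℂ} {W : Set (X → ℂ)} (h : IsFrameIn ψ W)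
    (T : (X → ℂ) → (Y → ℂ)) (hT : ∀ u v, dotC (T u) (T v) = dotC u v) :
    IsFrameIn (T ∘ ψ) (T '' W) := by
  obtain ⟨A, B, hA, hAB, hψW, hbound⟩ := h
  have hnorm2 (u : X → ℂ) : norm2 (T u) = norm2 u := by
    exact_mod_cast (dotC_self (T u)).symm.trans ((hT u u).trans (dotC_self u))
  refine ⟨A, B, hA, hAB, fun t => ⟨ψ t, hψW t, rfl⟩, ?_⟩
  rintro _ ⟨v, hv, rfl⟩
  simpa only [Function.comp_apply, hT, hnorm2] using hbound v hv

/-- `P k` plays the role of the orthogonal projection onto `W k`. -/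
theorem isFrameIn_univ_sigma {κ : Type*} [Fintype κ] {ι : κ → Type*} [∀ k, Fintype (ι k)]
    {F : (k : κ) → ι k → X → ℂ} {W : κ → Set (X → ℂ)} (hF : ∀ k, IsFrameIn (F k) (W k))
    (P : κ → (X → ℂ) → (X → ℂ)) (hPW : ∀ k v, P k v ∈ W k)
    (hP_dotC : ∀ k v, ∀ w ∈ W k, dotC v w = dotC (P k v) w)
    (hP_norm2 : ∀ v, norm2 v = ∑ k, norm2 (P k v)) :
    IsFrameIn (fun p : Σ k, ι k => F p.1 p.2) Set.univ := by
  choose A B hAB using hF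
  rcases isEmpty_or_nonempty κ with hκ | hκ
  · refine ⟨1, 1, one_pos, le_rfl, fun p => isEmptyElim p.1, fun v _ => ?_⟩
    simp [hP_norm2 v]
  have hne : (Finset.univ : Finset κ).Nonempty := Finset.univ_nonempty
  refine ⟨Finset.univ.inf' hne A, Finset.univ.sup' hne B,
    (Finset.lt_inf'_iff hne).2 fun k _ => (hAB k).1, ?_, fun _ => Set.mem_univ _, fun v _ => ?_⟩
  · obtain ⟨k⟩ := hκ
    exact (Finset.inf'_le A (Finset.mem_univ k)).trans
      ((hAB k).2.1.trans (Finset.le_sup' B (Finset.mem_univ k)))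
  have hsum : ∑ p : Σ k, ι k, Complex.normSq (dotC v (F p.1 p.2)) =
      ∑ k, ∑ t, Complex.normSq (dotC (P k v) (F k t)) := by
    rw [Fintype.sum_sigma]
    exact Finset.sum_congr rfl fun k _ => Finset.sum_congr rfl fun t _ => by
      rw [hP_dotC k v _ ((hAB k).2.2.1 t)]
  rw [hsum, hP_norm2 v, Finset.mul_sum, Finset.mul_sum]
  constructor
  · refine Finset.sum_le_sum fun k _ => le_trans ?_ ((hAB k).2.2.2 _ (hPW k v)).1
    exact mul_le_mul_of_nonneg_right (Finset.inf'_le A (Finset.mem_univ k)) (norm2_nonneg _)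
  · refine Finset.sum_le_sum fun k _ => le_trans ((hAB k).2.2.2 _ (hPW k v)).2 ?_
    exact mul_le_mul_of_nonneg_right (Finset.le_sup' B (Finset.mem_univ k)) (norm2_nonneg _)

end Frame

section Representation

variable {G : Type*} [Group G] {d : ℕ} (π : URep G d)

lemma URep.coe_map_mul (a b : G) :
    (π (a * b) : Matrix (Fin d) (Fin d) ℂ) = π a * π b := by
  rw [map_mul, Submonoid.coe_mul]

lemma URep.coe_map_inv (a : G) :
    (π a⁻¹ : Matrix (Fin d) (Fin d) ℂ) = star (π a : Matrix (Fin d) (Fin d) ℂ) := by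
  rw [map_inv, ← Unitary.star_eq_inv, Unitary.coe_star]

lemma URep.coe_map_inv_mul_self (a : G) :
    (π a⁻¹ : Matrix (Fin d) (Fin d) ℂ) * π a = 1 := by
  rw [← URep.coe_map_mul, inv_mul_cancel, map_one, Submonoid.coe_one]

variable {π}

/-- Schur's lemma: an eigenspace of `T` is `π`-invariant and nonzero, hence everything. -/
theorem URepIrreducible.exists_eq_smul_one_of_commute (hπ : URepIrreducible π)
    (T : Matrix (Fin d) (Fin d) ℂ) (hT : ∀ g, π g * T = T * π g) :
    ∃ μ : ℂ, T = μ • 1 := by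
  obtain ⟨hd, hirr⟩ := hπ
  have : Nonempty (Fin d) := ⟨⟨0, hd⟩⟩
  obtain ⟨μ, hμ⟩ := Module.End.exists_eigenvalue T.mulVecLin
  have hinv : ∀ g, ∀ ξ ∈ Module.End.eigenspace T.mulVecLin μ,
      (π g : Matrix (Fin d) (Fin d) ℂ) *ᵥ ξ ∈ Module.End.eigenspace T.mulVecLin μ := by
    intro g ξ hξ
    rw [Module.End.mem_eigenspace_iff, mulVecLin_apply] at hξ ⊢
    rw [mulVec_mulVec, ← hT, ← mulVec_mulVec, hξ, mulVec_smul]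
  have htop : Module.End.eigenspace T.mulVecLin μ = ⊤ :=
    (hirr _ hinv).resolve_left (Module.End.hasEigenvalue_iff.mp hμ)
  refine ⟨μ, ext_iff_mulVec.mpr fun v => ?_⟩
  have hv := Module.End.mem_eigenspace_iff.mp (htop ▸ Submodule.mem_top : v ∈ _)
  rw [mulVecLin_apply] at hv
  rw [hv, smul_mulVec, one_mulVec]

variable (π) [Fintype G]

lemma URep.commute_sum_conj (E : Matrix (Fin d) (Fin d) ℂ) (h : G) :
    π h * ∑ g, π g * E * π g⁻¹ = (∑ g, π g * E * π g⁻¹) * π h := by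
  rw [Finset.mul_sum, Finset.sum_mul]
  refine Fintype.sum_equiv (Equiv.mulLeft h) _ _ fun g => ?_
  simp only [Equiv.coe_mulLeft, _root_.mul_inv_rev, URep.coe_map_mul, mul_assoc,
    URep.coe_map_inv_mul_self, mul_one]

lemma URep.trace_sum_conj (E : Matrix (Fin d) (Fin d) ℂ) :
    trace (∑ g, (π g : Matrix (Fin d) (Fin d) ℂ) * E * (π g⁻¹ : Matrix (Fin d) (Fin d) ℂ)) =
      Fintype.card G * trace E := by
  simp only [trace_sum, trace_mul_cycle _ E, URep.coe_map_inv_mul_self, one_mul,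
    Finset.sum_const, Finset.card_univ, nsmul_eq_mul]

variable {π}

theorem URepIrreducible.sum_conj_eq (hπ : URepIrreducible π) (E : Matrix (Fin d) (Fin d) ℂ) :
    ∑ g, π g * E * π g⁻¹ = (Fintype.card G * trace E / d) • (1 : Matrix (Fin d) (Fin d) ℂ) := by
  obtain ⟨μ, hμ⟩ := hπ.exists_eq_smul_one_of_commute _ (URep.commute_sum_conj π E)
  have htrace := URep.trace_sum_conj π E
  rw [hμ, trace_smul, trace_one, Fintype.card_fin, smul_eq_mul] at htrace
  have hd : (d : ℂ) ≠ 0 := Nat.cast_ne_zero.mpr hπ.1.ne'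
  rw [hμ, ← htrace, mul_div_cancel_right₀ _ hd]

end Representation

section Coefficients

variable {G : Type*} [Group G] {d : ℕ} (π : URep G d) (i : Fin d)

lemma Theta_apply (X : Fin d → ℂ) (g : G) :
    Theta π i X g = ((π g : Matrix (Fin d) (Fin d) ℂ) *ᵥ X) i := by
  simp only [Theta, coeff, mulVec, dotProduct, mul_comm]

lemma Theta_eq_linearCombination :
    Theta π i = Fintype.linearCombination ℂ (fun k => coeff π k i) := by
  ext X g
  simp [Theta, Fintype.linearCombination_apply]

lemma coe_Esp : (Esp π i : Set (G → ℂ)) = Set.range (Theta π i) := by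
  rw [Esp, ← Fintype.range_linearCombination, Theta_eq_linearCombination, LinearMap.coe_range]

lemma mul_vecMulVec_star_mul_conjTranspose {m n : Type*} [Fintype n] (M : Matrix m n ℂ)
    (X Y : n → ℂ) :
    M * vecMulVec X (star Y) * Mᴴ = vecMulVec (M *ᵥ X) (star (M *ᵥ Y)) := by
  rw [mul_vecMulVec, vecMulVec_mul, star_mulVec]

lemma trace_vecMulVec_star (X Y : Fin d → ℂ) : trace (vecMulVec X (star Y)) = dotC X Y := rfl

variable {π}

/-- Schur orthogonality, from Schur's lemma applied to the average of `π g (X Yᴴ) π g⁻¹`. -/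
theorem URepIrreducible.dotC_Theta_Theta [Fintype G] (hπ : URepIrreducible π) (X Y : Fin d → ℂ) :
    dotC (Theta π i X) (Theta π i Y) = Fintype.card G / d * dotC X Y := by
  have hentry (g : G) : Theta π i X g * star (Theta π i Y g) =
      ((π g : Matrix (Fin d) (Fin d) ℂ) * vecMulVec X (star Y) *
        (π g⁻¹ : Matrix (Fin d) (Fin d) ℂ)) i i := by
    rw [URep.coe_map_inv, star_eq_conjTranspose, mul_vecMulVec_star_mul_conjTranspose,
      vecMulVec_apply, Theta_apply, Theta_apply, Pi.star_apply]
  calc dotC (Theta π i X) (Theta π i Y)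
      = (∑ g, (π g : Matrix (Fin d) (Fin d) ℂ) * vecMulVec X (star Y) *
          (π g⁻¹ : Matrix (Fin d) (Fin d) ℂ)) i i := by
        rw [Matrix.sum_apply]
        exact Finset.sum_congr rfl fun g _ => hentry g
    _ = Fintype.card G / d * dotC X Y := by
        rw [hπ.sum_conj_eq, Matrix.smul_apply, one_apply_eq, smul_eq_mul, mul_one,
          trace_vecMulVec_star, mul_div_right_comm]

end Coefficients

section Spectral

variable {d : ℕ} {M : Matrix (Fin d) (Fin d) ℂ}

lemma isEigvec_iff_mem_eigSp {lam : ℝ} {X : Fin d → ℂ} : IsEigvec M lam X ↔ X ∈ eigSp M lam := by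
  simp [IsEigvec, eigSp, sub_eq_zero]

lemma repSum_isHermitian {G : Type*} [Group G] (π : URep G d) {S : Finset G}
    (hS : ∀ s ∈ S, s⁻¹ ∈ S) : (repSum π S).IsHermitian := by
  rw [IsHermitian, repSum, conjTranspose_sum]
  refine Finset.sum_nbij' (·⁻¹) (·⁻¹) hS hS (fun a _ => inv_inv a) (fun a _ => inv_inv a)
    fun a _ => ?_
  rw [URep.coe_map_inv, star_eq_conjTranspose]

namespace Matrix.IsHermitian

lemma dotC_mulVec_left (hM : M.IsHermitian) (u v : Fin d → ℂ) :
    dotC (M *ᵥ u) v = dotC u (M *ᵥ v) := by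
  rw [dotC_eq_dotProduct, dotC_eq_dotProduct, star_mulVec, hM.eq, dotProduct_comm,
    dotProduct_mulVec, dotProduct_comm]

lemma dotC_eq_zero_of_isEigvec (hM : M.IsHermitian) {lam mu : ℝ} (hne : mu ≠ lam)
    {u v : Fin d → ℂ} (hu : IsEigvec M mu u) (hv : IsEigvec M lam v) : dotC u v = 0 := by
  have h := hM.dotC_mulVec_left u v
  rw [hu, hv, dotC_smul_left, dotC_smul_right, Complex.star_def, Complex.conj_ofReal] at h
  have hne' : (mu : ℂ) - lam ≠ 0 := sub_ne_zero.mpr (mod_cast hne)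
  exact (mul_eq_zero.mp (by rw [sub_mul, h, sub_self])).resolve_left hne'

variable (hM : M.IsHermitian)

lemma isEigvec_eigenvectorBasis (j : Fin d) :
    IsEigvec M (hM.eigenvalues j) (hM.eigenvectorBasis j) := by
  rw [IsEigvec, hM.mulVec_eigenvectorBasis, RCLike.real_smul_eq_coe_smul (K := ℂ)]
  rfl

lemma isEigval_eigenvalues (j : Fin d) : IsEigval M (hM.eigenvalues j) := by
  refine ⟨hM.eigenvectorBasis j, fun h => ?_, hM.isEigvec_eigenvectorBasis j⟩
  exact hM.eigenvectorBasis.orthonormal.ne_zero j (WithLp.ofLp_injective _ h)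

lemma sum_dotC_smul_eigenvectorBasis (X : Fin d → ℂ) :
    ∑ j, dotC X (hM.eigenvectorBasis j) • ⇑(hM.eigenvectorBasis j) = X := by
  simpa only [WithLp.ofLp_sum, WithLp.ofLp_smul, EuclideanSpace.inner_eq_star_dotProduct,
    dotC_eq_dotProduct] using
    congrArg WithLp.ofLp (hM.eigenvectorBasis.sum_repr' (WithLp.toLp 2 X))

def eigenComponent (lam : ℝ) (X : Fin d → ℂ) : Fin d → ℂ :=
  ∑ j with hM.eigenvalues j = lam, dotC X (hM.eigenvectorBasis j) • ⇑(hM.eigenvectorBasis j)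

lemma isEigvec_eigenComponent (lam : ℝ) (X : Fin d → ℂ) :
    IsEigvec M lam (hM.eigenComponent lam X) := by
  rw [isEigvec_iff_mem_eigSp]
  refine Submodule.sum_mem _ fun j hj => Submodule.smul_mem _ _ ?_
  rw [← isEigvec_iff_mem_eigSp, ← (Finset.mem_filter.mp hj).2]
  exact hM.isEigvec_eigenvectorBasis j

lemma sum_eigenComponent {Λ : Finset ℝ} (hΛ : ∀ j, hM.eigenvalues j ∈ Λ) (X : Fin d → ℂ) :
    ∑ lam ∈ Λ, hM.eigenComponent lam X = X := by
  simp only [eigenComponent]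
  rw [Finset.sum_fiberwise_of_maps_to fun j _ => hΛ j, hM.sum_dotC_smul_eigenvectorBasis]

lemma dotC_eigenComponent_left {lam : ℝ} {ψ : Fin d → ℂ} (hψ : IsEigvec M lam ψ)
    (X : Fin d → ℂ) : dotC (hM.eigenComponent lam X) ψ = dotC X ψ := by
  conv_rhs => rw [← hM.sum_dotC_smul_eigenvectorBasis X]
  rw [eigenComponent, dotC_sum_left, dotC_sum_left]
  refine Finset.sum_filter_of_ne fun j _ hj => ?_
  by_contra hne
  rw [dotC_smul_left, hM.dotC_eq_zero_of_isEigvec hne (hM.isEigvec_eigenvectorBasis j) hψ,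
    mul_zero] at hj
  exact hj rfl

lemma norm2_eq_sum_eigenComponent {Λ : Finset ℝ} (hΛ : ∀ j, hM.eigenvalues j ∈ Λ)
    (X : Fin d → ℂ) : norm2 X = ∑ lam ∈ Λ, norm2 (hM.eigenComponent lam X) := by
  have hdotC (lam : ℝ) : dotC (hM.eigenComponent lam X) X = norm2 (hM.eigenComponent lam X) := by
    rw [← star_dotC, ← hM.dotC_eigenComponent_left (hM.isEigvec_eigenComponent lam X),
      dotC_self, Complex.star_def, Complex.conj_ofReal]
  have h : (norm2 X : ℂ) = ∑ lam ∈ Λ, (norm2 (hM.eigenComponent lam X) : ℂ) := by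
    rw [← dotC_self]
    nth_rewrite 1 [← hM.sum_eigenComponent hΛ X]
    rw [dotC_sum_left]
    exact Finset.sum_congr rfl fun lam _ => hdotC lam
  exact_mod_cast h

theorem isFrameIn_univ_sigma_eigenspaces {Λ : Finset ℝ} (hΛ : ∀ j, hM.eigenvalues j ∈ Λ)
    {ι : ℝ → Type*} [∀ lam, Fintype (ι lam)] (F : (lam : ℝ) → ι lam → (Fin d → ℂ))
    (hF : ∀ lam ∈ Λ, IsFrameIn (F lam) {X | IsEigvec M lam X}) :
    IsFrameIn (fun p : Σ lam : Λ, ι (lam : ℝ) => F p.1 p.2) Set.univ :=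
  isFrameIn_univ_sigma (F := fun lam : Λ => F lam) (fun lam => hF lam lam.2)
    (fun lam => hM.eigenComponent lam)
    (fun lam => hM.isEigvec_eigenComponent lam)
    (fun _ X _ hψ => (hM.dotC_eigenComponent_left hψ X).symm)
    (fun X => (hM.norm2_eq_sum_eigenComponent hΛ X).trans (Finset.sum_coe_sort Λ _).symm)

end Matrix.IsHermitian

end Spectral

section SymmetricGroup

variable {n d : ℕ} {π : URep (Equiv.Perm (Fin n)) d}

lemma ThetaT_eq_Theta_smul (i : Fin d) (X : Fin d → ℂ) :
    ThetaT n π i X = Theta π i ((Real.sqrt (d / n.factorial) : ℂ) • X) := by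
  ext g
  simp only [ThetaT, Theta, Pi.smul_apply, smul_eq_mul, Finset.mul_sum, mul_assoc]

theorem URepIrreducible.dotC_ThetaT_ThetaT (hπ : URepIrreducible π) (i : Fin d)
    (X Y : Fin d → ℂ) : dotC (ThetaT n π i X) (ThetaT n π i Y) = dotC X Y := by
  have hsq : (Real.sqrt (d / n.factorial) : ℂ) * Real.sqrt (d / n.factorial) = d / n.factorial := by
    rw [← Complex.ofReal_mul, Real.mul_self_sqrt (by positivity)]
    push_cast
    rfl
  have hd : (d : ℂ) ≠ 0 := Nat.cast_ne_zero.mpr hπ.1.ne'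
  have hn : (n.factorial : ℂ) ≠ 0 := Nat.cast_ne_zero.mpr n.factorial_ne_zero
  rw [ThetaT_eq_Theta_smul, ThetaT_eq_Theta_smul, hπ.dotC_Theta_Theta, dotC_smul_left,
    dotC_smul_right, Complex.star_def, Complex.conj_ofReal, ← mul_assoc, ← mul_assoc,
    mul_assoc _ _ (Real.sqrt _ : ℂ), hsq, Fintype.card_perm, Fintype.card_fin]
  field_simp

theorem URepIrreducible.range_ThetaT (hπ : URepIrreducible π) (i : Fin d) :
    Set.range (ThetaT n π i) = Esp π i := by
  have hc : (Real.sqrt (d / n.factorial) : ℂ) ≠ 0 := by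
    have : (0 : ℝ) < d / n.factorial := div_pos (mod_cast hπ.1) (mod_cast n.factorial_pos)
    exact_mod_cast (Real.sqrt_pos.mpr this).ne'
  have hsurj : Function.Surjective fun X : Fin d → ℂ => (Real.sqrt (d / n.factorial) : ℂ) • X :=
    fun Y => ⟨_, smul_inv_smul₀ hc Y⟩
  rw [coe_Esp, ← hsurj.range_comp (Theta π i)]
  exact congrArg Set.range (funext (ThetaT_eq_Theta_smul i))

end SymmetricGroup

theorem stmt13_general {n : ℕ} (S : Finset (Equiv.Perm (Fin n)))
    (hS : ∀ s ∈ S, s⁻¹ ∈ S) {d : ℕ} (π : URep (Equiv.Perm (Fin n)) d)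
    (hπ : URepIrreducible π) (i : Fin d)
    (Λ : Finset ℝ) (hΛ : ∀ lam : ℝ, lam ∈ Λ ↔ IsEigval (repSum π S) lam)
    {ι : ℝ → Type*} [∀ lam, Fintype (ι lam)] (F : (lam : ℝ) → ι lam → (Fin d → ℂ))
    (hF : ∀ lam ∈ Λ, IsFrameIn (F lam) {X | IsEigvec (repSum π S) lam X}) :
    IsFrameIn (fun p : Σ lam : Λ, ι (lam : ℝ) => ThetaT n π i (F (p.1 : ℝ) p.2))
      ((Esp π i : Set (Equiv.Perm (Fin n) → ℂ))) := by
  have hM := repSum_isHermitian π hS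
  have hframe := hM.isFrameIn_univ_sigma_eigenspaces
    (fun j => (hΛ _).mpr (hM.isEigval_eigenvalues j)) F hF
  have hΦ := hframe.image_of_dotC_eq (ThetaT n π i) (hπ.dotC_ThetaT_ThetaT i)
  rwa [Set.image_univ, hπ.range_ThetaT i] at hΦ

/-- If, for each eigenvalue `λ` of `π(S)`, `F^λ` is a frame for `E_λ(π(S))`,
then `Φ_{π,i} = {Θ̃_{π,i,λ}(ψ) : ψ ∈ F^λ, λ ∈ σ(π(S))}` is a frame for the subspace
`E_{π,i}` of `L²(𝕊_n)`. -/
theorem stmt13 {n : ℕ} (hn : 1 ≤ n) (S : Finset (Equiv.Perm (Fin n)))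
    (hS : ∀ s ∈ S, s⁻¹ ∈ S) {d : ℕ} (π : URep (Equiv.Perm (Fin n)) d)
    (hπ : URepIrreducible π) (i : Fin d)
    (Λ : Finset ℝ) (hΛ : ∀ lam : ℝ, lam ∈ Λ ↔ IsEigval (repSum π S) lam)
    {ι : ℝ → Type*} [∀ lam, Fintype (ι lam)] (F : (lam : ℝ) → ι lam → (Fin d → ℂ))
    (hF : ∀ lam ∈ Λ, IsFrameIn (F lam) {X | IsEigvec (repSum π S) lam X}) :
    IsFrameIn (fun p : Σ lam : Λ, ι (lam : ℝ) => ThetaT n π i (F (p.1 : ℝ) p.2))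
      ((Esp π i : Set (Equiv.Perm (Fin n) → ℂ))) :=
  stmt13_general S hS π hπ i Λ hΛ F hF
end
end
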